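/- arXiv:1208.1663 — 2 statements merged into one kernel-verified Lean document; each statement's English description precedes it below -/
import Mathlib

section
/- The tetrahedron index satisfies, for all integers $m$ and $e$, the recursion $q^{e/2} I_\Delta(m-1,e) + q^{-m/2} I_\Delta(m,e-1) - I_\Delta(m,e) = 0$. The proof follows from the termwise identity: with $S(m,e,n) = (-1)^n q^{n(n+1)/2 - (n+e/2)m}/((q)_n (q)_{n+e})$, one has $q^{e/2} S(m-1,e,n) + q^{-m/2} S(m,e-1,n) - S(m,e,n) = 0$ for all $n$. -/
/- We work with the formal variable `t = q^(1/2)`, so that `q = t^2` and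
elements of `ℤ((q^(1/2)))` are described by their coefficient functions `ℤ → ℤ`
(coefficient of `t^k`).  The `q`-Pochhammer symbol `(q)_n = ∏_{i=1}^n (1-q^i)`
is a power series in `t` with constant term `1`, hence invertible. -/

/-- `(q)_n = ∏_{i=1}^n (1 - q^i)` as a power series in `t` with `q = t^2`. -/
noncomputable def qPoch (n : ℕ) : PowerSeries ℤ :=
  ∏ i ∈ Finset.range n, (1 - (PowerSeries.X : PowerSeries ℤ) ^ (2 * (i + 1)))

/-- The inverse `1/(q)_n` (the constant term of `(q)_n` is `1`). -/
noncomputable def qPochInv (n : ℕ) : PowerSeries ℤ :=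
  PowerSeries.invOfUnit (qPoch n) 1

/-- Coefficient of `t^k` in a power series in `t` (zero for negative `k`). -/
noncomputable def coeffZ (k : ℤ) (f : PowerSeries ℤ) : ℤ :=
  if 0 ≤ k then PowerSeries.coeff k.toNat f else 0

/-- Coefficient of `t^k` in the summand
`S(m,e,n) = (-1)^n q^{n(n+1)/2 - (n+e/2)m} / ((q)_n (q)_{n+e})`
of the tetrahedron index, with the convention `1/(q)_n = 0` for `n < 0`.
(In `t`-units the exponent is `n(n+1) - (2n+e)m`.) -/
noncomputable def Scoeff (m e : ℤ) (n : ℕ) (k : ℤ) : ℤ :=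
  if 0 ≤ (n : ℤ) + e then
    (-1) ^ n *
      coeffZ (k - ((n : ℤ) * (n + 1) - (2 * n + e) * m))
        (qPochInv n * qPochInv ((n : ℤ) + e).toNat)
  else 0

/-- Coefficient of `t^k` in the tetrahedron index `I_Δ(m,e)`; for fixed `k`
only finitely many `n` contribute, so the `finsum` is the honest sum. -/
noncomputable def Icoeff (m e : ℤ) (k : ℤ) : ℤ :=
  ∑ᶠ n : ℕ, Scoeff m e n k

/-! Writing `P b = 1/(q)_b`, the recursion `(q)_{b+1} = (q)_b (1 - q^{b+1})` gives
`P (b+1) = P b + q^{b+1} P (b+1)`. Shifting `m ↦ m - 1` (resp. `e ↦ e - 1`) in the summand turns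
the first two terms of the termwise identity into `(-1)^n q^{…} P n` times `q^{n+e} P (n+e)`
(resp. `P (n+e-1)`), so the identity is this recursion at `b + 1 = n + e`, with the convention
`P (-1) = 0` covering `n + e = 0`. For fixed `k` only finitely many `n` contribute, since the
exponent grows quadratically in `n`; so the identity sums to the recursion of the index. -/

open PowerSeries Function

lemma constantCoeff_qPoch (n : ℕ) : constantCoeff (qPoch n) = 1 := by
  simp [qPoch]

lemma qPoch_mul_qPochInv (n : ℕ) : qPoch n * qPochInv n = 1 :=
  mul_invOfUnit _ _ (by simp [constantCoeff_qPoch])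

lemma qPochInv_eq_mul_qPochInv_succ (b : ℕ) :
    qPochInv b = (1 - X ^ (2 * (b + 1))) * qPochInv (b + 1) :=
  calc qPochInv b = qPochInv b * (qPoch (b + 1) * qPochInv (b + 1)) := by
        rw [qPoch_mul_qPochInv, mul_one]
    _ = qPoch b * qPochInv b * ((1 - X ^ (2 * (b + 1))) * qPochInv (b + 1)) := by
        rw [qPoch, Finset.prod_range_succ, ← qPoch]; ring
    _ = (1 - X ^ (2 * (b + 1))) * qPochInv (b + 1) := by
        rw [qPoch_mul_qPochInv, one_mul]

lemma coeffZ_of_neg {k : ℤ} (hk : k < 0) (f : PowerSeries ℤ) : coeffZ k f = 0 :=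
  if_neg (by omega)

lemma coeffZ_add (k : ℤ) (f g : PowerSeries ℤ) :
    coeffZ k (f + g) = coeffZ k f + coeffZ k g := by
  unfold coeffZ; split <;> simp

lemma coeffZ_X_pow_mul (d : ℕ) (k : ℤ) (f : PowerSeries ℤ) :
    coeffZ k (X ^ d * f) = coeffZ (k - d) f := by
  unfold coeffZ
  by_cases hk : 0 ≤ k
  · rw [if_pos hk, coeff_X_pow_mul']
    by_cases hd : d ≤ k.toNat
    · rw [if_pos hd, if_pos (by omega), show k.toNat - d = (k - d).toNat by omega]
    · rw [if_neg hd, if_neg (by omega)]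
  · rw [if_neg hk, if_neg (by omega)]

lemma coeffZ_mul_qPochInv_succ (j : ℤ) (b : ℕ) (f : PowerSeries ℤ) :
    coeffZ j (f * qPochInv (b + 1)) =
      coeffZ j (f * qPochInv b) + coeffZ (j - (2 * (b + 1) : ℕ)) (f * qPochInv (b + 1)) := by
  rw [← coeffZ_X_pow_mul, ← coeffZ_add, qPochInv_eq_mul_qPochInv_succ b]
  ring_nf

lemma Scoeff_sub_one_left (m e : ℤ) (n : ℕ) (k : ℤ) :
    Scoeff (m - 1) e n (k - e) = Scoeff m e n (k - 2 * (n + e)) := by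
  unfold Scoeff
  congr 3
  ring

lemma Scoeff_add_Scoeff_sub_one_right (m e : ℤ) (n : ℕ) (k : ℤ) :
    Scoeff m e n (k - 2 * (n + e)) + Scoeff m (e - 1) n (k + m) = Scoeff m e n k := by
  unfold Scoeff
  set j := k - ((n : ℤ) * (n + 1) - (2 * n + e) * m)
  have harg_pred_e : k + m - ((n : ℤ) * (n + 1) - (2 * n + (e - 1)) * m) = j := by ring
  have harg_shift : k - 2 * (n + e) - ((n : ℤ) * (n + 1) - (2 * n + e) * m) = j - 2 * (n + e) := by ring
  rw [harg_pred_e, harg_shift]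
  rcases lt_trichotomy ((n : ℤ) + e) 0 with hneg | hzero | hpos
  · simp only [if_neg (show ¬ 0 ≤ (n : ℤ) + e by omega),
      if_neg (show ¬ 0 ≤ (n : ℤ) + (e - 1) by omega), add_zero]
  · simp only [if_neg (show ¬ 0 ≤ (n : ℤ) + (e - 1) by omega), hzero,
      mul_zero, sub_zero, add_zero]
  · obtain ⟨b, hb⟩ : ∃ b : ℕ, (n : ℤ) + e = b + 1 := ⟨((n : ℤ) + e).toNat - 1, by omega⟩
    rw [if_pos hpos.le, if_pos (by omega), if_pos hpos.le,
      show ((n : ℤ) + e).toNat = b + 1 by omega, show ((n : ℤ) + (e - 1)).toNat = b by omega,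
      coeffZ_mul_qPochInv_succ j b, hb]
    push_cast
    ring

lemma Scoeff_eq_zero_of_lt {m e k : ℤ} {n : ℕ} (h : k < n * (n + 1) - (2 * n + e) * m) :
    Scoeff m e n k = 0 := by
  unfold Scoeff
  split
  · rw [coeffZ_of_neg (by omega), mul_zero]
  · rfl

lemma hasFiniteSupport_Scoeff (m e k : ℤ) : HasFiniteSupport fun n => Scoeff m e n k := by
  refine (Set.finite_Iio (k.natAbs + (e * m).natAbs + 2 * m.natAbs + 1)).subset fun n hn => ?_
  by_contra hlarge
  refine hn (Scoeff_eq_zero_of_lt ?_)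
  have hn' : (k.natAbs + (e * m).natAbs + 2 * m.natAbs + 1 : ℤ) ≤ n := by
    simp only [Set.mem_Iio, not_lt] at hlarge
    exact_mod_cast hlarge
  have hm : -m ≤ (m.natAbs : ℤ) := by simpa using Int.le_natAbs (a := -m)
  nlinarith [Int.le_natAbs (a := k), Int.le_natAbs (a := e * m), Int.le_natAbs (a := m),
    sq_nonneg ((n : ℤ) - 2 * m.natAbs)]

/-- The tetrahedron index satisfies
`q^{e/2} I_Δ(m-1,e) + q^{-m/2} I_Δ(m,e-1) - I_Δ(m,e) = 0`,
and this follows from the corresponding termwise identity for the summands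
`S(m,e,n)`.  Both are stated coefficientwise in `t = q^{1/2}`
(multiplication by `q^{e/2} = t^e` shifts the coefficient index by `e`). -/
theorem tetrahedron_index_rec_two (m e : ℤ) :
    (∀ (n : ℕ) (k : ℤ),
      Scoeff (m - 1) e n (k - e) + Scoeff m (e - 1) n (k + m) - Scoeff m e n k = 0) ∧
    (∀ k : ℤ,
      Icoeff (m - 1) e (k - e) + Icoeff m (e - 1) (k + m) - Icoeff m e k = 0) := by
  have termwise (n : ℕ) (k : ℤ) :
      Scoeff (m - 1) e n (k - e) + Scoeff m (e - 1) n (k + m) - Scoeff m e n k = 0 := by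
    rw [Scoeff_sub_one_left, Scoeff_add_Scoeff_sub_one_right, sub_self]
  refine ⟨termwise, fun k => ?_⟩
  unfold Icoeff
  rw [← finsum_add_distrib (hasFiniteSupport_Scoeff _ _ _) (hasFiniteSupport_Scoeff _ _ _),
    ← finsum_sub_distrib ?_ (hasFiniteSupport_Scoeff _ _ _)]
  · simp only [termwise, finsum_zero]
  · exact (hasFiniteSupport_Scoeff _ _ _).add (hasFiniteSupport_Scoeff _ _ _)
end

section
/- For $|q| < 1$ and $|xyq| < 1$: $\frac{(xq;q)_\infty (yq;q)_\infty}{(xyq;q)_\infty} = \sum_{r,s \geq 0} (-1)^{r+s} \frac{q^{\frac12 (r-s)^2 + \frac12 (r+s)} x^r y^s}{(q;q)_r (q;q)_s}$. -/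
/-- `(q;q)_n = ∏_{i=1}^n (1 - q^i)`. -/
noncomputable def qPochN (q : ℂ) (n : ℕ) : ℂ :=
  ∏ i ∈ Finset.range n, (1 - q ^ (i + 1))

/-!
Euler's expansions `E(t) = ∑ₙ (-1)ⁿ q^(n(n+1)/2) tⁿ / (q;q)ₙ = (tq;q)_∞` and
`G(t) = ∑ₙ qⁿ tⁿ / (q;q)ₙ = 1 / (tq;q)_∞` come from the coefficient recursions, which give
`E(t) = (1 - tq) E(tq)` and `G(t) (1 - tq) = G(tq)`; iterate `N` times and let `N → ∞`, using
`E(tq^N), G(tq^N) → 1`. The left-hand side is then `E(x) E(y) G(xy)`, a product of absolutely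
convergent series, and its coefficient of `xᵃ yᵇ` is `(-1)^(a+b) q^(((a-b)² + a + b)/2) /
((q;q)_a (q;q)_b)` times `∑ₙ q^((a-n)(b-n)) [a, n]_q (q;q)_b / (q;q)_(b-n)`. That sum is `1`: it
is `q^(ab) ₂φ₁(q⁻ᵃ, q⁻ᵇ; 0; q, q)`, the case `c = 0` of q-Chu–Vandermonde, which follows by
induction on `a` through q-Pascal.
-/

open Filter Finset Topology

theorem summable_norm_of_succ_eq_mul {R : Type*} [SeminormedRing R] {f g : ℕ → R} {l : ℝ}
    (hl : l < 1) (hfg : ∀ n, f (n + 1) = f n * g n)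
    (hg : Tendsto (fun n ↦ ‖g n‖) atTop (𝓝 l)) : Summable fun n ↦ ‖f n‖ := by
  obtain ⟨r, hlr, hr⟩ := exists_between hl
  refine summable_of_ratio_norm_eventually_le hr ?_
  filter_upwards [hg.eventually_le_const hlr] with n hn
  simp only [norm_norm, hfg]
  calc ‖f n * g n‖ ≤ ‖f n‖ * ‖g n‖ := norm_mul_le _ _
    _ ≤ r * ‖f n‖ := by rw [mul_comm]; exact mul_le_mul_of_nonneg_right hn (norm_nonneg _)

section PowerSeries

variable {K : Type*} [NormedField K] {c : ℕ → K} {t q : K}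

theorem tsum_mul_pow_sub_tsum_mul_pow (ht : Summable fun n ↦ c n * t ^ n)
    (htq : Summable fun n ↦ c n * (t * q) ^ n) :
    ∑' n, c n * t ^ n - ∑' n, c n * (t * q) ^ n =
      ∑' n, c (n + 1) * (1 - q ^ (n + 1)) * t ^ (n + 1) := by
  rw [← ht.tsum_sub htq, (ht.sub htq).tsum_eq_zero_add]
  simp only [pow_zero, mul_one, sub_self, zero_add]
  exact tsum_congr fun n ↦ by ring

theorem tendsto_tsum_mul_pow_mul_pow [CompleteSpace K] (hc : Summable fun n ↦ ‖c n * t ^ n‖)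
    (hq : ‖q‖ < 1) : Tendsto (fun N ↦ ∑' n, c n * (t * q ^ N) ^ n) atTop (𝓝 (c 0)) := by
  have hlim : ∀ n, Tendsto (fun N ↦ c n * (t * q ^ N) ^ n) atTop (𝓝 (c n * (t * 0) ^ n)) :=
    fun n ↦ ((tendsto_pow_atTop_nhds_zero_of_norm_lt_one hq).const_mul t).pow n |>.const_mul _
  have hbound : ∀ N n, ‖c n * (t * q ^ N) ^ n‖ ≤ ‖c n * t ^ n‖ := fun N n ↦ by
    simp only [norm_mul, norm_pow, mul_pow]
    gcongr
    exact mul_le_of_le_one_right (by positivity) (by bound)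
  have hsum : ∑' n, c n * (t * 0) ^ n = c 0 := by
    rw [tsum_eq_single 0 fun n hn ↦ by simp [hn]]
    simp
  simpa only [hsum] using
    tendsto_tsum_of_dominated_convergence hc hlim (Eventually.of_forall (hbound ·))

end PowerSeries

theorem multipliable_one_sub_mul_pow {K : Type*} [NormedField K] [CompleteSpace K] {q : K}
    (hq : ‖q‖ < 1) (t : K) : Multipliable fun k ↦ 1 - t * q ^ (k + 1) := by
  simp_rw [sub_eq_add_neg]
  refine multipliable_one_add_of_summable ?_
  simp only [norm_neg, norm_mul, norm_pow]
  exact ((summable_geometric_of_lt_one (norm_nonneg q) hq).mul_left (‖t‖ * ‖q‖)).congr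
    fun k ↦ by ring

def diagShiftEquiv : (Σ ab : ℕ × ℕ, Fin (min ab.1 ab.2 + 1)) ≃ (ℕ × ℕ) × ℕ where
  toFun p := ((p.1.1 - p.2, p.1.2 - p.2), p.2)
  invFun z := ⟨(z.1.1 + z.2, z.1.2 + z.2), ⟨z.2, by omega⟩⟩
  left_inv := by
    rintro ⟨⟨a, b⟩, ⟨n, hn⟩⟩
    simp only [Nat.lt_succ_iff, le_min_iff] at hn
    refine Sigma.ext (Prod.ext (by simp; omega) (by simp; omega)) ?_
    rw [Fin.heq_ext_iff (by simp; omega)]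
  right_inv := by
    rintro ⟨⟨r, s⟩, n⟩
    simp

theorem tsum_eq_tsum_sum_range_min {α : Type*} [AddCommGroup α] [TopologicalSpace α]
    [IsTopologicalAddGroup α] [T3Space α] {T : (ℕ × ℕ) × ℕ → α} (hT : Summable T) :
    ∑' z, T z =
      ∑' ab : ℕ × ℕ, ∑ n ∈ range (min ab.1 ab.2 + 1), T ((ab.1 - n, ab.2 - n), n) := by
  have hT' : Summable fun p ↦ T (diagShiftEquiv p) := diagShiftEquiv.summable_iff.2 hT
  rw [← diagShiftEquiv.tsum_eq, hT'.tsum_sigma' fun _ ↦ (hasSum_fintype _).summable]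
  refine tsum_congr fun ab ↦ ?_
  rw [tsum_fintype]
  exact Fin.sum_univ_eq_sum_range (fun n ↦ T ((ab.1 - n, ab.2 - n), n)) _

theorem one_sub_pow_ne_zero {K : Type*} [NormedDivisionRing K] {q : K} (hq : ‖q‖ < 1) {n : ℕ}
    (hn : n ≠ 0) : 1 - q ^ n ≠ 0 := by
  rw [sub_ne_zero, ne_comm]
  intro h
  have := congrArg norm h
  rw [norm_pow, norm_one] at this
  exact (pow_lt_one₀ (norm_nonneg q) hq hn).ne this

section QPochhammer

variable {q : ℂ}

theorem qPochN_zero (q : ℂ) : qPochN q 0 = 1 := prod_range_zero _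

theorem qPochN_succ (q : ℂ) (n : ℕ) : qPochN q (n + 1) = qPochN q n * (1 - q ^ (n + 1)) :=
  prod_range_succ _ _

theorem qPochN_ne_zero (hq : ‖q‖ < 1) (n : ℕ) : qPochN q n ≠ 0 :=
  prod_ne_zero_iff.2 fun i _ ↦ one_sub_pow_ne_zero hq i.succ_ne_zero

/-- `(1 - q^m) ⋯ (1 - q^(m-n+1))`, i.e. `(q;q)_m / (q;q)_(m-n)` for `n ≤ m`; for `n > m` the
factor `1 - q^0` makes it vanish, so sums over `n` need no cut-off at `m`. -/
noncomputable def qFalling (q : ℂ) (m n : ℕ) : ℂ := ∏ i ∈ range n, (1 - q ^ (m - i))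

theorem qFalling_zero_right (q : ℂ) (m : ℕ) : qFalling q m 0 = 1 := prod_range_zero _

theorem qFalling_succ_right (q : ℂ) (m n : ℕ) :
    qFalling q m (n + 1) = qFalling q m n * (1 - q ^ (m - n)) := prod_range_succ _ _

theorem qFalling_succ_succ (q : ℂ) (m n : ℕ) :
    qFalling q (m + 1) (n + 1) = (1 - q ^ (m + 1)) * qFalling q m n := by
  rw [qFalling, prod_range_succ', mul_comm]
  simp [qFalling, Nat.succ_sub_succ]

theorem qFalling_eq_zero {m n : ℕ} (h : m < n) : qFalling q m n = 0 :=
  prod_eq_zero (mem_range.2 h) (by simp)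

theorem qPochN_mul_qFalling (q : ℂ) (r n : ℕ) :
    qPochN q r * qFalling q (r + n) n = qPochN q (r + n) := by
  induction n with
  | zero => simp [qFalling_zero_right]
  | succ n ih => rw [← add_assoc, qFalling_succ_succ, qPochN_succ, ← ih]; ring

/-- `q^((a-n)(b-n)) [a, n]_q (q;q)_b / (q;q)_(b-n)`. -/
noncomputable def chuTerm (q : ℂ) (a b n : ℕ) : ℂ :=
  q ^ ((a - n) * (b - n)) * qFalling q a n * qFalling q b n / qPochN q n

theorem chuTerm_zero_right (q : ℂ) (a b : ℕ) : chuTerm q a b 0 = q ^ (a * b) := by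
  simp [chuTerm, qFalling_zero_right, qPochN_zero]

theorem chuTerm_eq_zero_of_lt_left {a b n : ℕ} (h : a < n) : chuTerm q a b n = 0 := by
  simp [chuTerm, qFalling_eq_zero h]

theorem chuTerm_eq_zero_of_lt_right {a b n : ℕ} (h : b < n) : chuTerm q a b n = 0 := by
  simp [chuTerm, qFalling_eq_zero h]

theorem chuTerm_succ_succ (hq : ‖q‖ < 1) (a b n : ℕ) :
    chuTerm q (a + 1) b (n + 1) =
      q ^ (b - (n + 1)) * chuTerm q a b (n + 1) + (1 - q ^ (b - n)) * chuTerm q a b n := by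
  have hn := one_sub_pow_ne_zero hq n.succ_ne_zero
  have hPn := qPochN_ne_zero hq n
  simp only [chuTerm]
  rw [qFalling_succ_succ q a n, qFalling_succ_right q a n, qFalling_succ_right q b n, qPochN_succ]
  rcases le_or_gt b n with hbn | hnb
  · simp [Nat.sub_eq_zero_of_le hbn]
  obtain ⟨s, rfl⟩ := Nat.exists_eq_add_of_lt hnb
  rcases lt_trichotomy a n with han | rfl | hna
  · simp [qFalling_eq_zero han]
  · simp only [Nat.sub_self, pow_zero, sub_self, mul_zero, show a + s + 1 - a = s + 1 by omega]
    field_simp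
    ring
  · -- q-Pascal: `1 - q^(a+1) = (1 - q^(a-n)) + q^(a-n) (1 - q^(n+1))`
    obtain ⟨r, rfl⟩ := Nat.exists_eq_add_of_lt hna
    simp only [show n + r + 1 + 1 - (n + 1) = r + 1 by omega, show n + r + 1 - n = r + 1 by omega,
      show n + r + 1 - (n + 1) = r by omega, show n + s + 1 - n = s + 1 by omega,
      show n + s + 1 - (n + 1) = s by omega]
    field_simp
    ring

theorem sum_range_chuTerm (hq : ‖q‖ < 1) (a b : ℕ) :
    ∑ n ∈ range (a + 1), chuTerm q a b n = 1 := by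
  induction a with
  | zero => simp [chuTerm_zero_right]
  | succ a ih =>
    have hzero : chuTerm q (a + 1) b 0 = q ^ (b - 0) * chuTerm q a b 0 := by
      simp only [chuTerm_zero_right, Nat.sub_zero, ← pow_add]; ring_nf
    rw [sum_range_succ', hzero]
    simp only [chuTerm_succ_succ hq, sum_add_distrib]
    rw [add_right_comm, ← sum_range_succ' (fun n ↦ q ^ (b - n) * chuTerm q a b n),
      sum_range_succ, chuTerm_eq_zero_of_lt_left a.lt_succ_self, mul_zero, add_zero,
      ← sum_add_distrib]
    exact (sum_congr rfl fun n _ ↦ by ring).trans ih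

theorem sum_range_min_chuTerm (hq : ‖q‖ < 1) (a b : ℕ) :
    ∑ n ∈ range (min a b + 1), chuTerm q a b n = 1 := by
  rw [← sum_range_chuTerm hq a b]
  refine sum_subset (range_subset_range.2 (by omega)) fun n hn hn' ↦ ?_
  simp only [mem_range] at hn hn'
  exact chuTerm_eq_zero_of_lt_right (by omega)

end QPochhammer

section Euler

variable {q : ℂ}

noncomputable def eulerCoeff (q : ℂ) (n : ℕ) : ℂ :=
  (-1) ^ n * q ^ ((n + 1).choose 2) / qPochN q n

noncomputable def eulerInvCoeff (q : ℂ) (n : ℕ) : ℂ := q ^ n / qPochN q n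

theorem eulerCoeff_zero (q : ℂ) : eulerCoeff q 0 = 1 := by simp [eulerCoeff, qPochN_zero]

theorem eulerInvCoeff_zero (q : ℂ) : eulerInvCoeff q 0 = 1 := by
  simp [eulerInvCoeff, qPochN_zero]

theorem eulerCoeff_succ (q : ℂ) (n : ℕ) :
    eulerCoeff q (n + 1) = eulerCoeff q n * (-q ^ (n + 1) / (1 - q ^ (n + 1))) := by
  simp only [eulerCoeff, qPochN_succ, Nat.choose_succ_succ' (n + 1), Nat.choose_one_right]
  rw [div_mul_div_comm]
  congr 1
  ring

theorem eulerInvCoeff_succ (q : ℂ) (n : ℕ) :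
    eulerInvCoeff q (n + 1) = eulerInvCoeff q n * (q / (1 - q ^ (n + 1))) := by
  rw [eulerInvCoeff, eulerInvCoeff, qPochN_succ, div_mul_div_comm, pow_succ]

theorem tendsto_pow_succ_nhds_zero (hq : ‖q‖ < 1) :
    Tendsto (fun n ↦ q ^ (n + 1)) atTop (𝓝 0) :=
  (tendsto_pow_atTop_nhds_zero_of_norm_lt_one hq).comp (tendsto_add_atTop_nat 1)

theorem summable_norm_eulerCoeff_mul_pow (hq : ‖q‖ < 1) (t : ℂ) :
    Summable fun n ↦ ‖eulerCoeff q n * t ^ n‖ := by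
  have h := tendsto_pow_succ_nhds_zero hq
  refine summable_norm_of_succ_eq_mul (g := fun n ↦ -q ^ (n + 1) * t / (1 - q ^ (n + 1)))
    zero_lt_one (fun n ↦ by rw [eulerCoeff_succ]; ring) ?_
  have h1 : (1 : ℂ) - 0 ≠ 0 := by norm_num
  simpa using ((h.neg.mul_const t).div (tendsto_const_nhds.sub h) h1).norm

theorem summable_norm_eulerInvCoeff_mul_pow (hq : ‖q‖ < 1) {t : ℂ} (ht : ‖t * q‖ < 1) :
    Summable fun n ↦ ‖eulerInvCoeff q n * t ^ n‖ := by
  have h := tendsto_pow_succ_nhds_zero hq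
  refine summable_norm_of_succ_eq_mul (g := fun n ↦ t * q / (1 - q ^ (n + 1)))
    ht (fun n ↦ by rw [eulerInvCoeff_succ]; ring) ?_
  have h1 : (1 : ℂ) - 0 ≠ 0 := by norm_num
  simpa using ((tendsto_const_nhds (x := t * q)).div (tendsto_const_nhds.sub h) h1).norm

theorem tsum_eulerCoeff_mul_pow_eq (hq : ‖q‖ < 1) (t : ℂ) :
    ∑' n, eulerCoeff q n * t ^ n = (1 - t * q) * ∑' n, eulerCoeff q n * (t * q) ^ n := by
  have key := tsum_mul_pow_sub_tsum_mul_pow (summable_norm_eulerCoeff_mul_pow hq t).of_norm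
    (summable_norm_eulerCoeff_mul_pow hq (t * q)).of_norm
  have hterm (n : ℕ) : eulerCoeff q (n + 1) * (1 - q ^ (n + 1)) * t ^ (n + 1) =
      -(t * q) * (eulerCoeff q n * (t * q) ^ n) := by
    rw [eulerCoeff_succ, mul_assoc (eulerCoeff q n), div_mul_cancel₀ _
      (one_sub_pow_ne_zero hq n.succ_ne_zero)]
    ring
  rw [tsum_congr hterm, tsum_mul_left] at key
  linear_combination key

theorem tsum_eulerInvCoeff_mul_pow_mul (hq : ‖q‖ < 1) {t : ℂ} (ht : ‖t * q‖ < 1) :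
    (∑' n, eulerInvCoeff q n * t ^ n) * (1 - t * q) =
      ∑' n, eulerInvCoeff q n * (t * q) ^ n := by
  have htq : ‖t * q * q‖ < 1 := by
    rw [norm_mul]; exact (mul_le_of_le_one_right (norm_nonneg _) hq.le).trans_lt ht
  have key := tsum_mul_pow_sub_tsum_mul_pow (summable_norm_eulerInvCoeff_mul_pow hq ht).of_norm
    (summable_norm_eulerInvCoeff_mul_pow hq htq).of_norm
  have hterm (n : ℕ) : eulerInvCoeff q (n + 1) * (1 - q ^ (n + 1)) * t ^ (n + 1) =
      t * q * (eulerInvCoeff q n * t ^ n) := by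
    rw [eulerInvCoeff_succ, mul_assoc (eulerInvCoeff q n), div_mul_cancel₀ _
      (one_sub_pow_ne_zero hq n.succ_ne_zero)]
    ring
  rw [tsum_congr hterm, tsum_mul_left] at key
  linear_combination key

theorem tsum_eulerCoeff_mul_pow (hq : ‖q‖ < 1) (t : ℂ) :
    ∑' n, eulerCoeff q n * t ^ n = ∏' k, (1 - t * q ^ (k + 1)) := by
  have hiter (N : ℕ) : ∑' n, eulerCoeff q n * t ^ n =
      (∏ k ∈ range N, (1 - t * q ^ (k + 1))) * ∑' n, eulerCoeff q n * (t * q ^ N) ^ n := by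
    induction N with
    | zero => simp
    | succ N ih =>
      rw [ih, tsum_eulerCoeff_mul_pow_eq hq, prod_range_succ, mul_assoc t, ← pow_succ]
      ring
  have hlim := (multipliable_one_sub_mul_pow hq t).hasProd.tendsto_prod_nat.mul
    (tendsto_tsum_mul_pow_mul_pow (summable_norm_eulerCoeff_mul_pow hq t) hq)
  rw [eulerCoeff_zero, mul_one] at hlim
  exact tendsto_nhds_unique (tendsto_const_nhds.congr hiter) hlim

theorem tsum_eulerInvCoeff_mul_pow_mul_tprod (hq : ‖q‖ < 1) {t : ℂ} (ht : ‖t * q‖ < 1) :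
    (∑' n, eulerInvCoeff q n * t ^ n) * ∏' k, (1 - t * q ^ (k + 1)) = 1 := by
  have hiter (N : ℕ) :
      (∑' n, eulerInvCoeff q n * t ^ n) * ∏ k ∈ range N, (1 - t * q ^ (k + 1)) =
        ∑' n, eulerInvCoeff q n * (t * q ^ N) ^ n := by
    induction N with
    | zero => simp
    | succ N ih =>
      have htN : ‖t * q ^ N * q‖ < 1 := by
        calc ‖t * q ^ N * q‖ = ‖t‖ * ‖q‖ ^ N * ‖q‖ := by
              rw [norm_mul, norm_mul, norm_pow]
          _ ≤ ‖t‖ * 1 * ‖q‖ := by gcongr; exact pow_le_one₀ (norm_nonneg q) hq.le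
          _ < 1 := by rwa [mul_one, ← norm_mul]
      rw [prod_range_succ, ← mul_assoc, ih, pow_succ, ← mul_assoc,
        tsum_eulerInvCoeff_mul_pow_mul hq htN]
  have hlim := (multipliable_one_sub_mul_pow hq t).hasProd.tendsto_prod_nat.const_mul
    (∑' n, eulerInvCoeff q n * t ^ n)
  refine tendsto_nhds_unique (hlim.congr hiter) ?_
  simpa [eulerInvCoeff_zero] using
    tendsto_tsum_mul_pow_mul_pow (summable_norm_eulerInvCoeff_mul_pow hq ht) hq

end Euler

def doubleSumExponent (a b : ℕ) : ℕ := ((((a : ℤ) - (b : ℤ)) ^ 2 + a + b) / 2).toNat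

theorem doubleSumExponent_add_mul (r s n : ℕ) :
    doubleSumExponent (r + n) (s + n) + r * s = (r + 1).choose 2 + (s + 1).choose 2 + n := by
  have two_mul_choose (m : ℕ) : (2 : ℤ) * ((m + 1).choose 2 : ℕ) = m * (m + 1) := by
    rw [Nat.choose_two_right, Nat.add_sub_cancel, mul_comm (m + 1)]
    exact_mod_cast Nat.mul_div_cancel' (Nat.even_mul_succ_self m).two_dvd
  have hr := two_mul_choose r
  have hs := two_mul_choose s
  have hle : r * s ≤ (r + 1).choose 2 + (s + 1).choose 2 := by
    zify; nlinarith [sq_nonneg ((r : ℤ) - s)]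
  have key : (((r + n : ℕ) : ℤ) - (s + n : ℕ)) ^ 2 + (r + n : ℕ) + (s + n : ℕ) =
      2 * ((((r + 1).choose 2 + (s + 1).choose 2 + n : ℕ) : ℤ) - (r * s : ℕ)) := by
    push_cast
    linear_combination (-1 : ℤ) * hr - hs
  rw [doubleSumExponent, key, Int.mul_ediv_cancel_left _ two_ne_zero]
  omega

section Assembly

variable {q : ℂ}

theorem eulerCoeff_mul_eulerCoeff_mul_eulerInvCoeff (hq : ‖q‖ < 1) (x y : ℂ) (r s n : ℕ) :
    eulerCoeff q r * x ^ r * (eulerCoeff q s * y ^ s) * (eulerInvCoeff q n * (x * y) ^ n) =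
      (-1) ^ (r + n + (s + n)) * q ^ doubleSumExponent (r + n) (s + n) * x ^ (r + n) *
          y ^ (s + n) / (qPochN q (r + n) * qPochN q (s + n)) * chuTerm q (r + n) (s + n) n := by
  have hPr := qPochN_ne_zero hq r
  have hPs := qPochN_ne_zero hq s
  have hPn := qPochN_ne_zero hq n
  have hFr := right_ne_zero_of_mul ((qPochN_mul_qFalling q r n).symm ▸ qPochN_ne_zero hq _)
  have hFs := right_ne_zero_of_mul ((qPochN_mul_qFalling q s n).symm ▸ qPochN_ne_zero hq _)
  have hexp : q ^ doubleSumExponent (r + n) (s + n) * q ^ (r * s) =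
      q ^ (r + 1).choose 2 * q ^ (s + 1).choose 2 * q ^ n := by
    rw [← pow_add, doubleSumExponent_add_mul, pow_add, pow_add]
  have hsign : (-1 : ℂ) ^ (r + n + (s + n)) = (-1) ^ r * (-1) ^ s := by
    rw [show r + n + (s + n) = r + s + 2 * n by ring, pow_add, pow_mul, pow_add]
    norm_num
  rw [chuTerm, Nat.add_sub_cancel, Nat.add_sub_cancel, ← qPochN_mul_qFalling q r n,
    ← qPochN_mul_qFalling q s n, hsign]
  simp only [eulerCoeff, eulerInvCoeff]
  field_simp
  linear_combination (-(x ^ (r + n) * y ^ (s + n))) * hexp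

theorem sum_range_min_eulerCoeff_products (hq : ‖q‖ < 1) (x y : ℂ) (a b : ℕ) :
    ∑ n ∈ range (min a b + 1), eulerCoeff q (a - n) * x ^ (a - n) *
        (eulerCoeff q (b - n) * y ^ (b - n)) * (eulerInvCoeff q n * (x * y) ^ n) =
      (-1) ^ (a + b) * q ^ doubleSumExponent a b * x ^ a * y ^ b / (qPochN q a * qPochN q b) *
        ∑ n ∈ range (min a b + 1), chuTerm q a b n := by
  rw [mul_sum]
  refine sum_congr rfl fun n hn ↦ ?_
  obtain ⟨r, rfl⟩ := Nat.exists_eq_add_of_le' (show n ≤ a by simp at hn; omega)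
  obtain ⟨s, rfl⟩ := Nat.exists_eq_add_of_le' (show n ≤ b by simp at hn; omega)
  rw [Nat.add_sub_cancel, Nat.add_sub_cancel]
  exact eulerCoeff_mul_eulerCoeff_mul_eulerInvCoeff hq x y r s n

end Assembly

/-- For `|q| < 1` and `|xyq| < 1`:
`(xq;q)_∞ (yq;q)_∞ / (xyq;q)_∞
  = ∑_{r,s ≥ 0} (-1)^{r+s} q^{(r-s)²/2 + (r+s)/2} x^r y^s / ((q;q)_r (q;q)_s)`. -/
theorem qpoch_double_sum_two (q x y : ℂ) (hq : ‖q‖ < 1) (hxyq : ‖x * y * q‖ < 1) :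
    (∏' i : ℕ, (1 - x * q ^ (i + 1))) * (∏' i : ℕ, (1 - y * q ^ (i + 1))) /
        (∏' i : ℕ, (1 - x * y * q ^ (i + 1))) =
      ∑' rs : ℕ × ℕ,
        (-1) ^ (rs.1 + rs.2) *
            q ^ (((((rs.1 : ℤ) - (rs.2 : ℤ)) ^ 2 + rs.1 + rs.2) / 2).toNat) *
            x ^ rs.1 * y ^ rs.2 / (qPochN q rs.1 * qPochN q rs.2) := by
  have hx := summable_norm_eulerCoeff_mul_pow hq x
  have hy := summable_norm_eulerCoeff_mul_pow hq y
  have hxy := summable_norm_eulerInvCoeff_mul_pow hq hxyq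
  rw [← tsum_eulerCoeff_mul_pow hq x, ← tsum_eulerCoeff_mul_pow hq y, div_eq_mul_inv,
    inv_eq_of_mul_eq_one_left (tsum_eulerInvCoeff_mul_pow_mul_tprod hq hxyq),
    tsum_mul_tsum_of_summable_norm hx hy, tsum_mul_tsum_of_summable_norm (hx.mul_norm hy) hxy,
    tsum_eq_tsum_sum_range_min (summable_mul_of_summable_norm (R := ℂ) (hx.mul_norm hy) hxy)]
  refine tsum_congr fun ab ↦ ?_
  rw [sum_range_min_eulerCoeff_products hq x y ab.1 ab.2, sum_range_min_chuTerm hq, mul_one]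
  rfl
end
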